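/- Let F be a quasihomogeneous WDVV solution with charges (q,d) on U ⊆ ℝ^N, with Euler field E = Σ_α(1−q_α)t^α∂_α, and let g^{αβ}(t) be its intersection form. On the open subset of U where (g^{αβ}(t)) is invertible, the Levi-Civita covariant derivative of E with respect to the metric g satisfies ∂_α E^β + Γ^β_{αγ} E^γ = ((1−d)/2) δ^β_α for all α, β, where E^β = (1−q_β)t^β and Γ^ε_{αβ} are the Christoffel symbols of g in the coordinates t. In particular, if d = 1 the Euler vector field is covariantly constant with respect to the Levi-Civita connection of the intersection form. -/

import Mathlib

open scoped BigOperators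

/-- Partial derivative of `f` in the `α`-th coordinate direction. -/
noncomputable def pd {N : ℕ} (α : Fin N) (f : (Fin N → ℝ) → ℝ) : (Fin N → ℝ) → ℝ :=
  fun t => fderiv ℝ f t (Pi.single α 1)

/-- Third partial derivatives `c_{αβγ} = ∂³F/∂t^α∂t^β∂t^γ`. -/
noncomputable def c3 {N : ℕ} (F : (Fin N → ℝ) → ℝ) (α β γ : Fin N) : (Fin N → ℝ) → ℝ :=
  pd α (pd β (pd γ F))

/-- `η_{αβ} = δ_{α+β,N+1}` (in 1-based index notation); in 0-based indexing this is
`β = Fin.rev α`.  It coincides with its own inverse `η^{αβ}`. -/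
def eta {N : ℕ} (α β : Fin N) : ℝ := if β = α.rev then 1 else 0

/-- The index of the coordinate `t^N` (0-based: `N-1`). -/
def lastIdx (N : ℕ) [NeZero N] : Fin N := (0 : Fin N).rev

/-- `F` is a WDVV solution on `U`: smoothness, normalization `c_{1αβ} = η_{αβ}`, and the
associativity equations. -/
def IsWDVV {N : ℕ} [NeZero N] (F : (Fin N → ℝ) → ℝ) (U : Set (Fin N → ℝ)) : Prop :=
  (∀ t ∈ U, ContDiffAt ℝ (⊤ : ℕ∞) F t) ∧
  (∀ t ∈ U, ∀ α β : Fin N, c3 F 0 α β t = eta α β) ∧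
  (∀ t ∈ U, ∀ α β γ δ : Fin N,
    ∑ lam, ∑ mu, c3 F α β lam t * eta lam mu * c3 F mu δ γ t =
    ∑ lam, ∑ mu, c3 F δ β lam t * eta lam mu * c3 F mu α γ t)

/-- `F` is quasihomogeneous on `U` with charges `q` and weight `d`:
`q_1 = 0`, `q_N = d`, `q_α + q_{N+1-α} = d`, and `E(F) = (3-d) F` modulo a polynomial of
degree at most `2`, where `E = Σ_α (1-q_α) t^α ∂_α`. -/
def IsQH {N : ℕ} [NeZero N] (F : (Fin N → ℝ) → ℝ) (U : Set (Fin N → ℝ))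
    (q : Fin N → ℝ) (d : ℝ) : Prop :=
  q 0 = 0 ∧ q (lastIdx N) = d ∧ (∀ α : Fin N, q α + q α.rev = d) ∧
  ∃ Q : MvPolynomial (Fin N) ℝ, Q.totalDegree ≤ 2 ∧
    ∀ t ∈ U, (∑ α, (1 - q α) * t α * pd α F t) = (3 - d) * F t + MvPolynomial.eval t Q

/-- The inversion map `t ↦ t̂`:
`t̂^1 = (1/2) t_σ t^σ / t^N`, `t̂^α = t^α/t^N` (`1<α<N`), `t̂^N = -1/t^N`,
with `t_σ t^σ = Σ_σ t^σ t^{N+1-σ}`. -/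
noncomputable def invMap {N : ℕ} [NeZero N] (t : Fin N → ℝ) : Fin N → ℝ := fun α =>
  if α = 0 then (∑ σ, t σ * t σ.rev) / (2 * t (lastIdx N))
  else if α = lastIdx N then -1 / t (lastIdx N)
  else t α / t (lastIdx N)

/-- The inverse of the inversion map, `t̂ ↦ t`:
`t^1 = (1/2) t̂_σ t̂^σ / t̂^N`, `t^α = -t̂^α/t̂^N` (`1<α<N`), `t^N = -1/t̂^N`. -/
noncomputable def invMapInv {N : ℕ} [NeZero N] (s : Fin N → ℝ) : Fin N → ℝ := fun α =>
  if α = 0 then (∑ σ, s σ * s σ.rev) / (2 * s (lastIdx N))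
  else if α = lastIdx N then -1 / s (lastIdx N)
  else -(s α) / s (lastIdx N)

/-- The inverted prepotential `F̂(t̂) = (t̂^N)² F(t(t̂)) + (1/2) t̂^1 t̂_σ t̂^σ`. -/
noncomputable def invF {N : ℕ} [NeZero N] (F : (Fin N → ℝ) → ℝ) : (Fin N → ℝ) → ℝ :=
  fun s => (s (lastIdx N))^2 * F (invMapInv s) + (1/2) * s 0 * (∑ σ, s σ * s σ.rev)

/-- The intersection form `g^{αβ}(t) = Σ_ε (1-q_ε) t^ε η^{αλ} η^{βμ} c_{λμε}(t)`. -/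
noncomputable def iform {N : ℕ} (F : (Fin N → ℝ) → ℝ) (q : Fin N → ℝ)
    (t : Fin N → ℝ) : Matrix (Fin N) (Fin N) ℝ :=
  Matrix.of fun α β =>
    ∑ ε, (1 - q ε) * t ε * ∑ lam, ∑ mu, eta α lam * eta β mu * c3 F lam mu ε t

/-- The Christoffel symbols (with one upper index) of the Levi-Civita connection of the
metric `g_{αβ}` (the matrix inverse of the intersection form), in the coordinates `t`:
`Γ^ε_{αβ} = (1/2) g^{εσ} (∂_α g_{σβ} + ∂_β g_{σα} - ∂_σ g_{αβ})`. -/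
noncomputable def christoffel {N : ℕ} (F : (Fin N → ℝ) → ℝ) (q : Fin N → ℝ)
    (t : Fin N → ℝ) (ε α β : Fin N) : ℝ :=
  (1/2) * ∑ σ, iform F q t ε σ *
    (pd α (fun x => (iform F q x)⁻¹ σ β) t + pd β (fun x => (iform F q x)⁻¹ σ α) t
      - pd σ (fun x => (iform F q x)⁻¹ α β) t)

/-!
The normalization `c_{1αβ} = η_{αβ}` makes the last column of the intersection form the Euler
field, `g^{αN} = E^α`. Since `g^{αβ} = E(∂_{α'} ∂_{β'} F)` (`α' = N + 1 - α`) and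
quasihomogeneity makes `∂_{α'} ∂_{β'} F` homogeneous up to a constant,
`E(g^{αβ}) = (1 + d - q_α - q_β) g^{αβ}`. Together with `g_{αβ} E^β = δ_{αN}` and
`∂ g⁻¹ = -g⁻¹ (∂g) g⁻¹`, this turns the contraction of the Christoffel symbols with `E` into
linear algebra at a point, in which the terms involving the charges cancel.
-/

open MvPolynomial

section PartialDerivatives

variable {N : ℕ} {f g : (Fin N → ℝ) → ℝ} {t : Fin N → ℝ}

lemma pd_congr (h : f =ᶠ[nhds t] g) (α : Fin N) : pd α f t = pd α g t := by
  simp only [pd, h.fderiv_eq]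

lemma pd_congr_of_eqOn {U : Set (Fin N → ℝ)} (hU : IsOpen U) (h : Set.EqOn f g U) (ht : t ∈ U)
    (α : Fin N) : pd α f t = pd α g t :=
  pd_congr (Filter.eventuallyEq_of_mem (hU.mem_nhds ht) h) α

lemma pd_const (c : ℝ) (α : Fin N) : pd α (fun _ => c) t = 0 := by
  simp [pd]

lemma pd_add (hf : DifferentiableAt ℝ f t) (hg : DifferentiableAt ℝ g t) (α : Fin N) :
    pd α (fun x => f x + g x) t = pd α f t + pd α g t := by
  simp [pd, fderiv_fun_add hf hg]

lemma pd_mul (hf : DifferentiableAt ℝ f t) (hg : DifferentiableAt ℝ g t) (α : Fin N) :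
    pd α (fun x => f x * g x) t = f t * pd α g t + g t * pd α f t := by
  simp [pd, fderiv_fun_mul hf hg]

lemma pd_const_mul (hf : DifferentiableAt ℝ f t) (c : ℝ) (α : Fin N) :
    pd α (fun x => c * f x) t = c * pd α f t := by
  simp [pd, fderiv_const_mul hf]

lemma pd_sum {ι : Type*} {s : Finset ι} {φ : ι → (Fin N → ℝ) → ℝ}
    (hφ : ∀ i ∈ s, DifferentiableAt ℝ (φ i) t) (α : Fin N) :
    pd α (fun x => ∑ i ∈ s, φ i x) t = ∑ i ∈ s, pd α (φ i) t := by
  simp [pd, fderiv_fun_sum hφ]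

lemma pd_coord (α ε : Fin N) : pd α (fun x => x ε) t = if ε = α then 1 else 0 := by
  simp [pd, fderiv_apply, Pi.single_apply]

lemma pd_const_mul_coord (c : ℝ) (α ε : Fin N) :
    pd α (fun x => c * x ε) t = c * if ε = α then 1 else 0 := by
  rw [pd_const_mul (differentiableAt_apply ε t), pd_coord]

lemma ContDiffAt.pd (hf : ContDiffAt ℝ (⊤ : ℕ∞) f t) (α : Fin N) :
    ContDiffAt ℝ (⊤ : ℕ∞) (pd α f) t :=
  (hf.fderiv_right (m := (⊤ : ℕ∞)) le_rfl).clm_apply contDiffAt_const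

lemma pd_comm (hf : ContDiffAt ℝ (⊤ : ℕ∞) f t) (α β : Fin N) :
    pd α (pd β f) t = pd β (pd α f) t := by
  have hsymm : IsSymmSndFDerivAt ℝ f t :=
    hf.isSymmSndFDerivAt (by
      simpa [minSmoothness_of_isRCLikeNormedField] using
        WithTop.coe_le_coe.mpr (le_top : (2 : ℕ∞) ≤ ⊤))
  have hdiff : DifferentiableAt ℝ (fderiv ℝ f) t :=
    (hf.fderiv_right (m := (⊤ : ℕ∞)) le_rfl).differentiableAt (by simp)
  have hpd (v w : Fin N → ℝ) :
      fderiv ℝ (fun x => fderiv ℝ f x v) t w = fderiv ℝ (fderiv ℝ f) t w v := by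
    rw [fderiv_clm_apply hdiff (differentiableAt_const v)]
    simp
  unfold pd
  rw [hpd, hpd, hsymm]

end PartialDerivatives

section Polynomials

variable {N : ℕ}

lemma contDiff_eval (Q : MvPolynomial (Fin N) ℝ) :
    ContDiff ℝ (⊤ : ℕ∞) (fun x : Fin N → ℝ => eval x Q) :=
  (AnalyticOnNhd.eval_mvPolynomial Q).contDiff

lemma pd_eval (Q : MvPolynomial (Fin N) ℝ) (i : Fin N) (t : Fin N → ℝ) :
    pd i (fun x => eval x Q) t = eval t (pderiv i Q) := by
  have hdiff (P : MvPolynomial (Fin N) ℝ) : DifferentiableAt ℝ (fun x => eval x P) t :=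
    (contDiff_eval P).contDiffAt.differentiableAt (by simp)
  induction Q using MvPolynomial.induction_on with
  | C a => simp [pd_const]
  | add P R hP hR => simp only [map_add, pd_add (hdiff P) (hdiff R), hP, hR]
  | mul_X P j hP =>
    simp only [map_mul, eval_X, pderiv_mul, pderiv_X, map_add,
      pd_mul (hdiff P) (differentiableAt_apply j t), hP, pd_coord, Pi.single_apply]
    split_ifs <;> simp only [mul_one, mul_zero, map_one, map_zero, zero_add, add_zero] <;> ring

lemma totalDegree_pderiv_le (Q : MvPolynomial (Fin N) ℝ) (i : Fin N) :
    (pderiv i Q).totalDegree ≤ Q.totalDegree - 1 := by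
  refine Finset.sup_le fun m hm => ?_
  have hmem : m + Finsupp.single i 1 ∈ Q.support := by
    rw [mem_support_iff, coeff_pderiv] at hm
    exact mem_support_iff.mpr (left_ne_zero_of_mul hm)
  have hdeg := le_totalDegree hmem
  rw [Finsupp.sum_add_index' (fun _ => rfl) (fun _ _ _ => rfl),
    Finsupp.sum_single_index rfl] at hdeg
  omega

lemma pd_pd_pd_eval_eq_zero {Q : MvPolynomial (Fin N) ℝ} (hQ : Q.totalDegree ≤ 2)
    (a b e : Fin N) (t : Fin N → ℝ) : pd a (pd b (pd e (fun x => eval x Q))) t = 0 := by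
  have hconst : (pderiv b (pderiv e Q)).totalDegree = 0 := by
    have := (totalDegree_pderiv_le (pderiv e Q) b).trans
      (Nat.sub_le_sub_right (totalDegree_pderiv_le Q e) 1)
    omega
  rw [totalDegree_eq_zero_iff_eq_C] at hconst
  have hpd (i : Fin N) (P : MvPolynomial (Fin N) ℝ) :
      pd i (fun x => eval x P) = fun x => eval x (pderiv i P) :=
    funext (pd_eval P i)
  rw [hpd, hpd, pd_eval, hconst, pderiv_C, map_zero]

end Polynomials

noncomputable def eulerDeriv {N : ℕ} (q : Fin N → ℝ) (f : (Fin N → ℝ) → ℝ) (x : Fin N → ℝ) :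
    ℝ :=
  ∑ σ, (1 - q σ) * x σ * pd σ f x

section EulerField

variable {N : ℕ} {q : Fin N → ℝ} {f g R : (Fin N → ℝ) → ℝ} {U : Set (Fin N → ℝ)}
  {x : Fin N → ℝ}

lemma eulerDeriv_congr_of_eqOn (hU : IsOpen U) (h : Set.EqOn f g U) (hx : x ∈ U) :
    eulerDeriv q f x = eulerDeriv q g x := by
  simp only [eulerDeriv, pd_congr_of_eqOn hU h hx]

lemma eulerDeriv_add (hf : DifferentiableAt ℝ f x) (hg : DifferentiableAt ℝ g x) :
    eulerDeriv q (fun y => f y + g y) x = eulerDeriv q f x + eulerDeriv q g x := by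
  simp only [eulerDeriv, pd_add hf hg, mul_add, Finset.sum_add_distrib]

lemma eulerDeriv_const_mul (hf : DifferentiableAt ℝ f x) (c : ℝ) :
    eulerDeriv q (fun y => c * f y) x = c * eulerDeriv q f x := by
  simp only [eulerDeriv, pd_const_mul hf, Finset.mul_sum]
  exact Finset.sum_congr rfl fun _ _ => by ring

lemma pd_eulerDeriv (hf : ContDiffAt ℝ (⊤ : ℕ∞) f x) (γ : Fin N) :
    pd γ (eulerDeriv q f) x = (1 - q γ) * pd γ f x + eulerDeriv q (pd γ f) x := by
  have hcoef (σ : Fin N) : DifferentiableAt ℝ (fun y : Fin N → ℝ => (1 - q σ) * y σ) x :=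
    (differentiableAt_apply σ x).const_mul _
  have hpd (σ : Fin N) : DifferentiableAt ℝ (pd σ f) x :=
    (hf.pd σ).differentiableAt (by simp)
  change pd γ (fun y => ∑ σ, (1 - q σ) * y σ * pd σ f y) x = _
  rw [pd_sum fun σ _ => (hcoef σ).fun_mul (hpd σ), eulerDeriv]
  simp only [pd_mul (hcoef _) (hpd _), pd_const_mul_coord, pd_comm hf γ, Finset.sum_add_distrib,
    mul_ite, mul_one, mul_zero, Finset.sum_ite_eq', Finset.mem_univ, if_true]
  ring

lemma eulerDeriv_pd_of_eqOn (hU : IsOpen U) (hf : ∀ y ∈ U, ContDiffAt ℝ (⊤ : ℕ∞) f y)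
    (hR : ∀ y ∈ U, ContDiffAt ℝ (⊤ : ℕ∞) R y) {μ : ℝ}
    (h : ∀ y ∈ U, eulerDeriv q f y = μ * f y + R y) (γ : Fin N) :
    ∀ y ∈ U, eulerDeriv q (pd γ f) y = (μ - (1 - q γ)) * pd γ f y + pd γ R y := by
  intro y hy
  have hfy : DifferentiableAt ℝ f y := (hf y hy).differentiableAt (by simp)
  have hRy : DifferentiableAt ℝ R y := (hR y hy).differentiableAt (by simp)
  have key := pd_congr_of_eqOn hU h hy γ
  rw [pd_eulerDeriv (hf y hy), pd_add (hfy.const_mul μ) hRy, pd_const_mul hfy] at key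
  linarith

end EulerField

section IntersectionForm

variable {N : ℕ} {F : (Fin N → ℝ) → ℝ} {q : Fin N → ℝ} {U : Set (Fin N → ℝ)}
  {x : Fin N → ℝ}

lemma iform_apply (F : (Fin N → ℝ) → ℝ) (q : Fin N → ℝ) (x : Fin N → ℝ) (a b : Fin N) :
    iform F q x a b = ∑ ε, (1 - q ε) * x ε * c3 F a.rev b.rev ε x := by
  simp [iform, eta, ite_mul, Finset.sum_ite_eq']

lemma contDiffAt_iform_apply (hF : ContDiffAt ℝ (⊤ : ℕ∞) F x) (a b : Fin N) :
    ContDiffAt ℝ (⊤ : ℕ∞) (fun y => iform F q y a b) x := by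
  simp only [iform_apply]
  exact ContDiffAt.sum fun ε _ => (contDiffAt_const.mul (contDiff_apply ℝ ℝ ε).contDiffAt).mul
    (((hF.pd ε).pd b.rev).pd a.rev)

lemma c3_comm_left (hF : ContDiffAt ℝ (⊤ : ℕ∞) F x) (a b e : Fin N) :
    c3 F a b e x = c3 F b a e x :=
  pd_comm (hF.pd e) a b

lemma iform_transpose (hF : ContDiffAt ℝ (⊤ : ℕ∞) F x) :
    (iform F q x).transpose = iform F q x := by
  ext a b
  simp only [Matrix.transpose_apply, iform_apply, c3_comm_left hF]

lemma iform_apply_eq_eulerDeriv (hU : IsOpen U) (hF : ∀ y ∈ U, ContDiffAt ℝ (⊤ : ℕ∞) F y)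
    (hx : x ∈ U) (a b : Fin N) :
    iform F q x a b = eulerDeriv q (pd a.rev (pd b.rev F)) x := by
  have hc (ε : Fin N) : c3 F a.rev b.rev ε x = pd ε (pd a.rev (pd b.rev F)) x := by
    rw [c3, pd_congr_of_eqOn hU (fun y hy => pd_comm (hF y hy) b.rev ε) hx,
      pd_comm ((hF x hx).pd b.rev)]
  simp only [iform_apply, eulerDeriv, hc]

variable [NeZero N]

lemma iform_apply_lastIdx (hW : IsWDVV F U) (hx : x ∈ U) (a : Fin N) :
    iform F q x a (lastIdx N) = (1 - q a) * x a := by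
  have hc (ε : Fin N) : c3 F a.rev (lastIdx N).rev ε x = if ε = a then 1 else 0 := by
    rw [show (lastIdx N).rev = 0 from Fin.rev_rev 0, c3_comm_left (hW.1 x hx), hW.2.1 x hx]
    simp [eta]
  simp [iform_apply, hc]

lemma eulerDeriv_iform_apply (hU : IsOpen U) (hF : ∀ y ∈ U, ContDiffAt ℝ (⊤ : ℕ∞) F y) {d : ℝ}
    (hQH : IsQH F U q d) (hx : x ∈ U) (a b : Fin N) :
    eulerDeriv q (fun y => iform F q y a b) x = (1 + d - q a - q b) * iform F q x a b := by
  obtain ⟨-, -, hrev, Q, hQ, hEF⟩ := hQH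
  have hQs : ∀ y ∈ U, ContDiffAt ℝ (⊤ : ℕ∞) (fun z => eval z Q) y :=
    fun y _ => (contDiff_eval Q).contDiffAt
  have hEFb := eulerDeriv_pd_of_eqOn hU hF hQs hEF b.rev
  have hEFab := eulerDeriv_pd_of_eqOn hU (fun y hy => (hF y hy).pd b.rev)
    (fun y hy => (hQs y hy).pd b.rev) hEFb a.rev
  set w := 3 - d - (1 - q b.rev) - (1 - q a.rev)
  have hiform : Set.EqOn (fun y => iform F q y a b)
      (fun y => w * pd a.rev (pd b.rev F) y + pd a.rev (pd b.rev (eval · Q)) y) U :=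
    fun y hy => (iform_apply_eq_eulerDeriv hU hF hy a b).trans (hEFab y hy)
  have hpoly : eulerDeriv q (pd a.rev (pd b.rev (eval · Q))) x = 0 := by
    simp [eulerDeriv, pd_pd_pd_eval_eq_zero hQ]
  have hdF : DifferentiableAt ℝ (pd a.rev (pd b.rev F)) x :=
    (((hF x hx).pd b.rev).pd a.rev).differentiableAt (by simp)
  have hdQ : DifferentiableAt ℝ (pd a.rev (pd b.rev (eval · Q))) x :=
    (((hQs x hx).pd b.rev).pd a.rev).differentiableAt (by simp)
  calc eulerDeriv q (fun y => iform F q y a b) x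
      = eulerDeriv q (fun y => w * pd a.rev (pd b.rev F) y
          + pd a.rev (pd b.rev (eval · Q)) y) x :=
        eulerDeriv_congr_of_eqOn hU hiform hx
    _ = w * iform F q x a b := by
        rw [eulerDeriv_add (hdF.const_mul w) hdQ, eulerDeriv_const_mul hdF, hpoly, add_zero,
          iform_apply_eq_eulerDeriv hU hF hx]
    _ = (1 + d - q a - q b) * iform F q x a b := by
        congr 1
        linarith [hrev a, hrev b]

end IntersectionForm

section MatrixFunctions

variable {E : Type*} [NormedAddCommGroup E] [NormedSpace ℝ E] {ι : Type*} [Fintype ι]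
  [DecidableEq ι] {M : E → Matrix ι ι ℝ} {x : E}

lemma differentiableAt_det (hM : ∀ i j, DifferentiableAt ℝ (fun y => M y i j) x) :
    DifferentiableAt ℝ (fun y => (M y).det) x := by
  simp only [Matrix.det_apply, Units.smul_def, zsmul_eq_mul]
  exact DifferentiableAt.fun_sum fun σ _ =>
    (HasFDerivAt.finsetProd fun i _ => (hM (σ i) i).hasFDerivAt).differentiableAt.const_mul _

lemma differentiableAt_adjugate_apply (hM : ∀ i j, DifferentiableAt ℝ (fun y => M y i j) x)
    (i j : ι) : DifferentiableAt ℝ (fun y => (M y).adjugate i j) x := by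
  simp only [Matrix.adjugate_apply]
  refine differentiableAt_det fun k l => ?_
  by_cases hk : k = j <;> simp [Matrix.updateRow_apply, hk, hM]

lemma differentiableAt_inv_apply (hM : ∀ i j, DifferentiableAt ℝ (fun y => M y i j) x)
    (hdet : IsUnit (M x).det) (i j : ι) : DifferentiableAt ℝ (fun y => (M y)⁻¹ i j) x := by
  simp only [Matrix.inv_def, Matrix.smul_apply, Ring.inverse_eq_inv', smul_eq_mul]
  exact ((differentiableAt_det hM).inv hdet.ne_zero).mul (differentiableAt_adjugate_apply hM i j)

end MatrixFunctions

noncomputable def pdMatrix {N : ℕ} {ι : Type*} (μ : Fin N) (M : (Fin N → ℝ) → Matrix ι ι ℝ)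
    (t : Fin N → ℝ) : Matrix ι ι ℝ :=
  Matrix.of fun a b => pd μ (fun x => M x a b) t

section MatrixPartialDerivatives

variable {N : ℕ} {ι : Type*} [Fintype ι] {A B M : (Fin N → ℝ) → Matrix ι ι ℝ}
  {t : Fin N → ℝ}

lemma pdMatrix_mul (hA : ∀ i j, DifferentiableAt ℝ (fun y => A y i j) t)
    (hB : ∀ i j, DifferentiableAt ℝ (fun y => B y i j) t) (μ : Fin N) :
    pdMatrix μ (fun y => A y * B y) t = pdMatrix μ A t * B t + A t * pdMatrix μ B t := by
  ext a b
  simp only [pdMatrix, Matrix.of_apply, Matrix.mul_apply, Matrix.add_apply]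
  rw [pd_sum fun k _ => (hA a k).fun_mul (hB k b)]
  simp only [pd_mul (hA _ _) (hB _ _), ← Finset.sum_add_distrib]
  exact Finset.sum_congr rfl fun _ _ => by ring

lemma pdMatrix_inv [DecidableEq ι] (hM : ∀ i j, DifferentiableAt ℝ (fun y => M y i j) t)
    (hdet : IsUnit (M t).det) (μ : Fin N) :
    pdMatrix μ (fun y => (M y)⁻¹) t = -((M t)⁻¹ * pdMatrix μ M t * (M t)⁻¹) := by
  have hinv : ∀ᶠ y in nhds t, (M y)⁻¹ * M y = 1 := by
    filter_upwards [(differentiableAt_det hM).continuousAt.eventually_ne hdet.ne_zero] with y hy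
    exact Matrix.nonsing_inv_mul _ (isUnit_iff_ne_zero.mpr hy)
  have hzero : pdMatrix μ (fun y => (M y)⁻¹ * M y) t = 0 := by
    ext a b
    rw [pdMatrix, Matrix.of_apply,
      pd_congr (hinv.mono fun y hy => congrFun (congrFun hy a) b) μ, pd_const]
    rfl
  rw [pdMatrix_mul (differentiableAt_inv_apply hM hdet) hM] at hzero
  calc pdMatrix μ (fun y => (M y)⁻¹) t
      = pdMatrix μ (fun y => (M y)⁻¹) t * M t * (M t)⁻¹ := by
        rw [Matrix.mul_assoc, Matrix.mul_nonsing_inv _ hdet, Matrix.mul_one]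
    _ = -((M t)⁻¹ * pdMatrix μ M t * (M t)⁻¹) := by
        rw [eq_neg_of_add_eq_zero_left hzero, neg_mul]

end MatrixPartialDerivatives

namespace ColumnContraction

/-! With `D μ = ∂_μ G` and `P μ = ∂_μ (G⁻¹)`, the three terms of the Christoffel symbols
`Γ^β_{αγ}` contracted with the column `E^γ = G γ n`. -/

variable {ι : Type*} [Fintype ι] [DecidableEq ι] {G : Matrix ι ι ℝ} {D P : ι → Matrix ι ι ℝ}
  {q : ι → ℝ} {d : ℝ} {n : ι}

lemma first_term (hG : IsUnit G.det) (hP : ∀ μ, P μ = -(G⁻¹ * D μ * G⁻¹)) (α β : ι) :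
    ∑ γ, (∑ σ, G β σ * P α σ γ) * G γ n = -D α β n := by
  calc ∑ γ, (∑ σ, G β σ * P α σ γ) * G γ n = (G * (P α * G)) β n := by
        simp only [Matrix.mul_apply, Finset.sum_mul, Finset.mul_sum]
        rw [Finset.sum_comm]
        exact Finset.sum_congr rfl fun _ _ => Finset.sum_congr rfl fun _ _ => by ring
    _ = -D α β n := by
        rw [hP, Matrix.neg_mul, Matrix.mul_assoc, Matrix.nonsing_inv_mul G hG, Matrix.mul_one,
          Matrix.mul_neg, ← Matrix.mul_assoc, Matrix.mul_nonsing_inv G hG, Matrix.one_mul,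
          Matrix.neg_apply]

lemma second_term (hG : IsUnit G.det) (hP : ∀ μ, P μ = -(G⁻¹ * D μ * G⁻¹))
    (hhom : ∀ a b, ∑ γ, G γ n * D γ a b = (1 + d - q a - q b) * G a b) (α β : ι) :
    ∑ γ, (∑ σ, G β σ * P γ σ α) * G γ n = -∑ k, (1 + d - q β - q k) * G β k * G⁻¹ k α := by
  have hGP (μ i j : ι) : (G * P μ) i j = -(D μ * G⁻¹) i j := by
    rw [hP, Matrix.mul_neg, ← Matrix.mul_assoc, ← Matrix.mul_assoc, Matrix.mul_nonsing_inv G hG,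
      Matrix.one_mul, Matrix.neg_apply]
  calc ∑ γ, (∑ σ, G β σ * P γ σ α) * G γ n = ∑ γ, (G * P γ) β α * G γ n := by
        simp only [Matrix.mul_apply]
    _ = -∑ k, (∑ γ, G γ n * D γ β k) * G⁻¹ k α := by
        simp only [hGP, neg_mul, Finset.sum_neg_distrib, Matrix.mul_apply, Finset.sum_mul]
        rw [Finset.sum_comm]
        exact congrArg _ (Finset.sum_congr rfl fun _ _ => Finset.sum_congr rfl fun _ _ => by ring)
    _ = -∑ k, (1 + d - q β - q k) * G β k * G⁻¹ k α := by
        simp only [hhom]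

lemma third_term (hG : IsUnit G.det) (hGT : G.transpose = G)
    (hP : ∀ μ, P μ = -(G⁻¹ * D μ * G⁻¹))
    (hDn : ∀ μ a, D μ a n = (1 - q a) * if a = μ then 1 else 0) (α β : ι) :
    ∑ γ, (∑ σ, G β σ * P σ α γ) * G γ n = -∑ k, (1 - q k) * G β k * G⁻¹ k α := by
  have hPG (μ i j : ι) : (P μ * G) i j = -(G⁻¹ * D μ) i j := by
    rw [hP, Matrix.neg_mul, Matrix.mul_assoc, Matrix.nonsing_inv_mul G hG, Matrix.mul_one,
      Matrix.neg_apply]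
  have hHT : G⁻¹.transpose = G⁻¹ := by rw [Matrix.transpose_nonsing_inv, hGT]
  calc ∑ γ, (∑ σ, G β σ * P σ α γ) * G γ n = ∑ σ, G β σ * (P σ * G) α n := by
        simp only [Finset.sum_mul, Matrix.mul_apply, Finset.mul_sum]
        rw [Finset.sum_comm]
        exact Finset.sum_congr rfl fun _ _ => Finset.sum_congr rfl fun _ _ => by ring
    _ = -∑ σ, G β σ * ∑ k, G⁻¹ α k * D σ k n := by
        simp only [hPG, Matrix.mul_apply, mul_neg, Finset.sum_neg_distrib]
    _ = -∑ k, (1 - q k) * G β k * G⁻¹ k α := by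
        simp only [hDn, mul_ite, mul_zero, mul_one, Finset.sum_ite_eq', Finset.mem_univ, if_true,
          ← Matrix.transpose_apply G⁻¹ α, hHT]
        exact congrArg _ (Finset.sum_congr rfl fun _ _ => by ring)

end ColumnContraction

open ColumnContraction in
theorem covariantDeriv_column_eq {ι : Type*} [Fintype ι] [DecidableEq ι] {G : Matrix ι ι ℝ}
    {D P : ι → Matrix ι ι ℝ} {q : ι → ℝ} {d : ℝ} {n : ι} (hG : IsUnit G.det)
    (hGT : G.transpose = G) (hP : ∀ μ, P μ = -(G⁻¹ * D μ * G⁻¹))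
    (hDn : ∀ μ a, D μ a n = (1 - q a) * if a = μ then 1 else 0)
    (hhom : ∀ a b, ∑ γ, G γ n * D γ a b = (1 + d - q a - q b) * G a b) (α β : ι) :
    D α β n + ∑ γ, (1 / 2 * ∑ σ, G β σ * (P α σ γ + P γ σ α - P σ α γ)) * G γ n =
      (1 - d) / 2 * if α = β then 1 else 0 := by
  have hsplit : ∑ γ, (1 / 2 * ∑ σ, G β σ * (P α σ γ + P γ σ α - P σ α γ)) * G γ n =
      1 / 2 * (∑ γ, (∑ σ, G β σ * P α σ γ) * G γ n + (∑ γ, (∑ σ, G β σ * P γ σ α) * G γ n -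
        ∑ γ, (∑ σ, G β σ * P σ α γ) * G γ n)) := by
    simp only [mul_add, mul_sub, add_mul, sub_mul, Finset.sum_add_distrib, Finset.sum_sub_distrib,
      Finset.mul_sum, Finset.sum_mul]
    ring_nf
  have hcancel : ∑ γ, (∑ σ, G β σ * P γ σ α) * G γ n - ∑ γ, (∑ σ, G β σ * P σ α γ) * G γ n =
      (q β - d) * if β = α then 1 else 0 := by
    calc _ = (q β - d) * ∑ k, G β k * G⁻¹ k α := by
          rw [second_term hG hP hhom, third_term hG hGT hP hDn, neg_sub_neg,
            ← Finset.sum_sub_distrib, Finset.mul_sum]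
          exact Finset.sum_congr rfl fun _ _ => by ring
      _ = (q β - d) * if β = α then 1 else 0 := by
          rw [← Matrix.mul_apply, Matrix.mul_nonsing_inv G hG, Matrix.one_apply]
  rw [hsplit, first_term hG hP, hcancel, hDn]
  by_cases h : α = β
  · subst h
    rw [if_pos rfl]
    ring
  · simp [h, Ne.symm h]

theorem statement14_general {N : ℕ} [NeZero N]
    (U : Set (Fin N → ℝ)) (hU : IsOpen U)
    (F : (Fin N → ℝ) → ℝ) (q : Fin N → ℝ) (d : ℝ)
    (hW : IsWDVV F U) (hQ : IsQH F U q d) :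
    ∀ t ∈ U, IsUnit (iform F q t).det →
      ∀ α β : Fin N,
        pd α (fun x => (1 - q β) * x β) t +
            ∑ γ, christoffel F q t β α γ * ((1 - q γ) * t γ) =
          ((1 - d) / 2) * (if α = β then 1 else 0) := by
  intro t ht hdet α β
  have hE (x : Fin N → ℝ) (hx : x ∈ U) (γ : Fin N) :
      (1 - q γ) * x γ = iform F q x γ (lastIdx N) :=
    (iform_apply_lastIdx hW hx γ).symm
  have hg (a b : Fin N) : DifferentiableAt ℝ (fun x => iform F q x a b) t :=
    (contDiffAt_iform_apply (hW.1 t ht) a b).differentiableAt (by simp)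
  have hDn (μ a : Fin N) :
      pdMatrix μ (iform F q) t a (lastIdx N) = (1 - q a) * if a = μ then 1 else 0 :=
    (pd_congr_of_eqOn hU (fun x hx => (hE x hx a).symm) ht μ).trans (pd_const_mul_coord _ μ a)
  have hhom (a b : Fin N) : ∑ γ, iform F q t γ (lastIdx N) * pdMatrix γ (iform F q) t a b =
      (1 + d - q a - q b) * iform F q t a b := by
    simpa only [pdMatrix, Matrix.of_apply, eulerDeriv, hE t ht] using
      eulerDeriv_iform_apply hU hW.1 hQ ht a b
  rw [pd_congr_of_eqOn hU (hE · · β) ht α]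
  simp only [hE t ht]
  exact covariantDeriv_column_eq hdet (iform_transpose (hW.1 t ht)) (pdMatrix_inv hg hdet) hDn
    hhom α β

/-- the Levi-Civita covariant derivative of the Euler vector field with
respect to the intersection form satisfies `∇_α E^β = ((1-d)/2) δ^β_α`; in particular,
if `d = 1` then `E` is covariantly constant. -/
theorem statement14 {N : ℕ} [NeZero N] (hN : 3 ≤ N)
    (U : Set (Fin N → ℝ)) (hU : IsOpen U)
    (F : (Fin N → ℝ) → ℝ) (q : Fin N → ℝ) (d : ℝ)
    (hW : IsWDVV F U) (hQ : IsQH F U q d) :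
    ∀ t ∈ U, IsUnit (iform F q t).det →
      ∀ α β : Fin N,
        pd α (fun x => (1 - q β) * x β) t +
            ∑ γ, christoffel F q t β α γ * ((1 - q γ) * t γ) =
          ((1 - d) / 2) * (if α = β then 1 else 0) :=
  statement14_general U hU F q d hW hQ
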